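/- arXiv:2605.20762 — 3 statements merged into one kernel-verified Lean document; each statement's English description precedes it below -/
import Mathlib

section
/- Let $n \geq 1$ and let $1 = t_0 < t_1 < \cdots < t_n$ be integers. Set $\Delta = \max_{1 \leq s \leq n} (t_s - t_0)/s$. Then for all real numbers $a_0 \geq a_1 \geq \cdots \geq a_{n-1} \geq 1$, one has $a_0^{t_1 - t_0} a_1^{t_2 - t_1} \cdots a_{n-1}^{t_n - t_{n-1}} \leq (a_0 a_1 \cdots a_{n-1})^{\Delta}$. -/
/-! Take logarithms, `x s = log (a s)`. Summation by parts writes `∑ (t (s+1) - t s) x s` as a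
combination of the partial sums `t k - t 0` with the nonnegative weights `x (k-1) - x k` and
`x (n-1)`. Each partial sum is at most `k Δ`, the corresponding partial sum of the constant
sequence `Δ`, and the same combination of those is `Δ ∑ x s`. -/

open Finset

theorem sum_range_mul_le_of_partialSums_le {R : Type*} [Ring R] [PartialOrder R]
    [IsOrderedRing R] {f g h : ℕ → R} {n : ℕ}
    (hf : ∀ i, i + 1 < n → f (i + 1) ≤ f i) (hf_last : 0 ≤ f (n - 1))
    (hgh : ∀ k ∈ Icc 1 n, ∑ i ∈ range k, g i ≤ ∑ i ∈ range k, h i) :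
    ∑ i ∈ range n, f i * g i ≤ ∑ i ∈ range n, f i * h i := by
  rcases Nat.eq_zero_or_pos n with rfl | hn
  · simp
  simp only [← smul_eq_mul (a := f _), sum_range_by_parts f]
  refine sub_le_sub (smul_le_smul_of_nonneg_left (hgh n (mem_Icc.2 ⟨hn, le_rfl⟩)) hf_last)
    (sum_le_sum fun i hi => ?_)
  rw [mem_range] at hi
  exact mul_le_mul_of_nonpos_left (hgh (i + 1) (mem_Icc.2 ⟨by omega, by omega⟩))
    (sub_nonpos.2 (hf i (by omega)))

theorem Real.prod_rpow_eq_exp_sum {ι : Type*} {s : Finset ι} {a : ι → ℝ} (ha : ∀ i ∈ s, 0 < a i)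
    (g : ι → ℝ) : ∏ i ∈ s, a i ^ g i = Real.exp (∑ i ∈ s, Real.log (a i) * g i) := by
  rw [Real.exp_sum]
  exact prod_congr rfl fun i hi => Real.rpow_def_of_pos (ha i hi) _

theorem prod_range_rpow_le_of_partialSums_le {a g h : ℕ → ℝ} {n : ℕ}
    (ha : ∀ i, i + 1 < n → a (i + 1) ≤ a i) (ha1 : ∀ i < n, 1 ≤ a i)
    (hgh : ∀ k ∈ Icc 1 n, ∑ i ∈ range k, g i ≤ ∑ i ∈ range k, h i) :
    ∏ i ∈ range n, a i ^ g i ≤ ∏ i ∈ range n, a i ^ h i := by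
  rcases Nat.eq_zero_or_pos n with rfl | hn
  · simp
  have ha0 : ∀ i ∈ range n, 0 < a i := fun i hi => one_pos.trans_le (ha1 i (mem_range.1 hi))
  rw [Real.prod_rpow_eq_exp_sum ha0, Real.prod_rpow_eq_exp_sum ha0, Real.exp_le_exp]
  refine sum_range_mul_le_of_partialSums_le (fun i hi => ?_)
    (Real.log_nonneg (ha1 _ (by omega))) hgh
  exact Real.log_le_log (one_pos.trans_le (ha1 _ hi)) (ha i hi)

theorem gap_lemma_multiplicative_general (n : ℕ) (hn : 1 ≤ n) (t : ℕ → ℤ)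
    (Δ : ℝ)
    (hΔ : Δ = (Finset.Icc 1 n).sup' (Finset.nonempty_Icc.2 hn)
      (fun s => ((t s - t 0 : ℤ) : ℝ) / (s : ℝ)))
    (a : ℕ → ℝ) (hamono : ∀ i j, i ≤ j → j < n → a j ≤ a i)
    (ha1 : ∀ i, i < n → 1 ≤ a i) :
    ∏ s ∈ Finset.range n, a s ^ (((t (s + 1) - t s : ℤ) : ℝ)) ≤
      (∏ s ∈ Finset.range n, a s) ^ Δ := by
  rw [← Real.finsetProd_rpow _ _ fun i hi => zero_le_one.trans (ha1 i (mem_range.1 hi))]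
  refine prod_range_rpow_le_of_partialSums_le (fun i hi => hamono i (i + 1) i.le_succ hi) ha1
    fun k hk => ?_
  have hk0 : (0 : ℝ) < k := by exact_mod_cast (mem_Icc.1 hk).1
  have hΔk : ((t k - t 0 : ℤ) : ℝ) / k ≤ Δ :=
    hΔ ▸ le_sup' (fun s : ℕ => ((t s - t 0 : ℤ) : ℝ) / s) hk
  push_cast at hΔk ⊢
  rw [sum_range_sub (fun i => (t i : ℝ)) k, sum_const, card_range, nsmul_eq_mul]
  rwa [div_le_iff₀' hk0] at hΔk

theorem gap_lemma_multiplicative (n : ℕ) (hn : 1 ≤ n) (t : ℕ → ℤ)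
    (ht0 : t 0 = 1) (htmono : StrictMonoOn t (Set.Icc 0 n))
    (Δ : ℝ)
    (hΔ : Δ = (Finset.Icc 1 n).sup' (Finset.nonempty_Icc.2 hn)
      (fun s => ((t s - t 0 : ℤ) : ℝ) / (s : ℝ)))
    (a : ℕ → ℝ) (hamono : ∀ i j, i ≤ j → j < n → a j ≤ a i)
    (ha1 : ∀ i, i < n → 1 ≤ a i) :
    ∏ s ∈ Finset.range n, a s ^ (((t (s + 1) - t s : ℤ) : ℝ)) ≤
      (∏ s ∈ Finset.range n, a s) ^ Δ :=
  gap_lemma_multiplicative_general n hn t Δ hΔ a hamono ha1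
end

section
/- Let $n \geq 1$ and let $1 = t_0 < t_1 < \cdots < t_n$ be integers, and set $\Delta = \max_{1 \leq s \leq n} (t_s - 1)/s$. Then for all real numbers $b_0 \geq b_1 \geq \cdots \geq b_{n-1} \geq 0$, one has $\sum_{s=0}^{n-1} (t_{s+1} - t_s)\, b_s \leq \Delta \sum_{s=0}^{n-1} b_s$. -/
open Finset

lemma abel_parts (n : ℕ) (f c : ℕ → ℝ) (hf : f 0 = 0) (hc : c n = 0) :
    ∑ s ∈ Finset.range n, (f (s + 1) - f s) * c s =
      ∑ s ∈ Finset.range n, f (s + 1) * (c s - c (s + 1)) := by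
  have h := Finset.sum_range_sub (fun s => f s * c s) n
  have h0 : ∑ s ∈ Finset.range n, (f (s + 1) * c (s + 1) - f s * c s) = 0 := by
    rw [h, hf, hc]; ring
  have h1 : ∑ s ∈ Finset.range n,
      ((f (s + 1) - f s) * c s - f (s + 1) * (c s - c (s + 1))) = 0 := by
    rw [← h0]; apply Finset.sum_congr rfl; intros; ring
  rw [Finset.sum_sub_distrib] at h1
  linarith

theorem gap_lemma_additive (n : ℕ) (hn : 1 ≤ n) (t : ℕ → ℤ)
    (ht0 : t 0 = 1) (htmono : StrictMonoOn t (Set.Icc 0 n))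
    (Δ : ℝ)
    (hΔ : Δ = (Finset.Icc 1 n).sup' (Finset.nonempty_Icc.2 hn)
      (fun s => ((t s - 1 : ℤ) : ℝ) / (s : ℝ)))
    (b : ℕ → ℝ) (hbmono : ∀ i j, i ≤ j → j < n → b j ≤ b i)
    (hb0 : ∀ i, i < n → 0 ≤ b i) :
    ∑ s ∈ Finset.range n, ((t (s + 1) - t s : ℤ) : ℝ) * b s ≤
      Δ * ∑ s ∈ Finset.range n, b s := by
  set c : ℕ → ℝ := fun s => if s < n then b s else 0 with hc
  have hcb : ∀ s ∈ Finset.range n, b s = c s := by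
    intro s hs
    simp [hc, Finset.mem_range.mp hs]
  have hcn : c n = 0 := by simp [hc]
  -- c is nonincreasing and nonnegative step differences
  have hstep : ∀ s < n, 0 ≤ c s - c (s + 1) := by
    intro s hs
    rcases lt_or_ge (s + 1) n with h | h
    · have := hbmono s (s + 1) (by omega) h
      simp [hc, hs, h]; linarith
    · have : ¬ (s + 1 < n) := by omega
      simp [hc, hs, this]
      exact hb0 s hs
  -- key bound: (t (s+1) - 1 : ℝ) ≤ Δ * (s+1) for s < n
  have hkey : ∀ s < n, ((t (s + 1) - 1 : ℤ) : ℝ) ≤ Δ * (s + 1 : ℕ) := by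
    intro s hs
    have hmem : s + 1 ∈ Finset.Icc 1 n := by
      rw [Finset.mem_Icc]; omega
    have hle := Finset.le_sup' (fun s => ((t s - 1 : ℤ) : ℝ) / (s : ℝ)) hmem
    rw [← hΔ] at hle
    have hpos : (0 : ℝ) < ((s + 1 : ℕ) : ℝ) := by positivity
    calc ((t (s + 1) - 1 : ℤ) : ℝ)
        = ((t (s + 1) - 1 : ℤ) : ℝ) / ((s + 1 : ℕ) : ℝ) * ((s + 1 : ℕ) : ℝ) := by
          field_simp
      _ ≤ Δ * ((s + 1 : ℕ) : ℝ) := by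
          apply mul_le_mul_of_nonneg_right hle hpos.le
  -- rewrite both sides via Abel summation
  have hf0 : ((t 0 - 1 : ℤ) : ℝ) = 0 := by rw [ht0]; simp
  have hL : ∑ s ∈ Finset.range n, ((t (s + 1) - t s : ℤ) : ℝ) * b s =
      ∑ s ∈ Finset.range n, ((t (s + 1) - 1 : ℤ) : ℝ) * (c s - c (s + 1)) := by
    rw [Finset.sum_congr rfl (fun s hs => by rw [hcb s hs])]
    have := abel_parts n (fun s => ((t s - 1 : ℤ) : ℝ)) c hf0 hcn
    simp only [push_cast] at this ⊢
    convert this using 2 with s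
    push_cast
    ring
  have hR : Δ * ∑ s ∈ Finset.range n, b s =
      ∑ s ∈ Finset.range n, (Δ * (s + 1 : ℕ)) * (c s - c (s + 1)) := by
    rw [Finset.sum_congr rfl hcb, Finset.mul_sum]
    have := abel_parts n (fun s => Δ * (s : ℕ)) c (by simp) hcn
    rw [← this]
    apply Finset.sum_congr rfl
    intro s _
    push_cast
    ring
  rw [hL, hR]
  apply Finset.sum_le_sum
  intro s hs
  have hs' := Finset.mem_range.mp hs
  exact mul_le_mul_of_nonneg_right (hkey s hs') (hstep s hs')
end

section
/- Let $\nu_1 \geq \nu_2 \geq \cdots \geq \nu_q \geq 0$ be a nonincreasing sequence of natural numbers, let $M \geq 0$, let $\Delta \geq 1$ be real, and let $1 = i_0 < i_1 < \cdots < i_p < i_{p+1} \leq q + 1$ be indices such that $i_s \leq \Delta s$ for every $1 \leq s \leq p+1$, and such that $\nu_j = 0$ for all $j \geq i_{p+1}$. Then $\sum_{i=1}^{q} \max(0, \nu_i - M) \leq \Delta \sum_{s=0}^{p} \max(0, \nu_{i_s} - M)$. -/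
open Finset

lemma sum_Ico_split_aux (f : ℕ → ℝ) (i : ℕ → ℕ) :
    ∀ n, (∀ a b, a ≤ b → b ≤ n → i a ≤ i b) →
      ∑ s ∈ range n, ∑ j ∈ Ico (i s) (i (s + 1)), f j = ∑ j ∈ Ico (i 0) (i n), f j := by
  intro n
  induction n with
  | zero => simp
  | succ n ih =>
    intro hm
    rw [Finset.sum_range_succ, ih (fun a b hab hb => hm a b hab (hb.trans (Nat.le_succ n)))]
    exact Finset.sum_Ico_consecutive f (hm 0 n (Nat.zero_le n) (Nat.le_succ n))
      (hm n (n + 1) (Nat.le_succ n) le_rfl)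

lemma gap_aux (Δ : ℝ) (hΔ : 1 ≤ Δ) (i : ℕ → ℕ) (hi0 : i 0 = 1) (b : ℕ → ℝ) :
    ∀ n, (∀ s, 0 ≤ b s) → (∀ s, s < n → b (s + 1) ≤ b s) →
      (∀ s, 1 ≤ s → s ≤ n + 1 → (i s : ℝ) ≤ Δ * s) →
      ∑ s ∈ range (n + 1), ((i (s + 1) : ℝ) - i s) * b s ≤
        Δ * ∑ s ∈ range (n + 1), b s + ((i (n + 1) : ℝ) - Δ * (n + 1)) * b n := by
  intro n
  induction n with
  | zero =>
    intro hb0 _ _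
    have h := hb0 0
    simp [hi0]
    nlinarith [h]
  | succ n ih =>
    intro hb0 hbmono hibd
    have key := ih hb0 (fun s hs => hbmono s (hs.trans (Nat.lt_succ_self n)))
      (fun s h1 h2 => hibd s h1 (h2.trans (Nat.le_succ _)))
    rw [Finset.sum_range_succ, Finset.sum_range_succ (f := b)]
    have hle : (i (n + 1) : ℝ) ≤ Δ * ((n : ℝ) + 1) := by
      have := hibd (n + 1) (Nat.le_add_left 1 n) (by omega)
      push_cast at this
      linarith
    have hb : b (n + 1) ≤ b n := hbmono n (Nat.lt_succ_self n)
    have hmul : ((i (n + 1) : ℝ) - Δ * (n + 1)) * b n ≤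
        ((i (n + 1) : ℝ) - Δ * (n + 1)) * b (n + 1) := by
      apply mul_le_mul_of_nonpos_left hb (by linarith)
    push_cast
    push_cast at key hmul
    nlinarith [hb0 (n + 1)]

theorem truncation_core (q M p : ℕ) (Δ : ℝ) (hΔ : 1 ≤ Δ) (ν : ℕ → ℕ)
    (hmono : ∀ a b, 1 ≤ a → a ≤ b → b ≤ q → ν b ≤ ν a)
    (i : ℕ → ℕ) (hi0 : i 0 = 1)
    (histrict : StrictMonoOn i (Set.Icc 0 (p + 1)))
    (hile : i (p + 1) ≤ q + 1)
    (hibound : ∀ s, 1 ≤ s → s ≤ p + 1 → (i s : ℝ) ≤ Δ * s)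
    (hzero : ∀ j, i (p + 1) ≤ j → j ≤ q → ν j = 0) :
    ∑ j ∈ Finset.Icc 1 q, max 0 ((ν j : ℝ) - M) ≤
      Δ * ∑ s ∈ Finset.range (p + 1), max 0 ((ν (i s) : ℝ) - M) := by
  set f : ℕ → ℝ := fun j => max 0 ((ν j : ℝ) - M) with hf
  set b : ℕ → ℝ := fun s => f (i s) with hb
  have himono : ∀ a c, a ≤ c → c ≤ p + 1 → i a ≤ i c := by
    intro a c hac hc
    rcases eq_or_lt_of_le hac with rfl | h
    · exact le_rfl
    · exact le_of_lt (histrict (Set.mem_Icc.2 ⟨Nat.zero_le a, hac.trans hc⟩)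
        (Set.mem_Icc.2 ⟨Nat.zero_le c, hc⟩) h)
  have hb0 : ∀ s, 0 ≤ b s := fun s => le_max_left _ _
  have hf0 : ∀ j, 0 ≤ f j := fun j => le_max_left _ _
  have hi1 : ∀ s, s ≤ p + 1 → 1 ≤ i s := by
    intro s hs
    have := himono 0 s (Nat.zero_le s) hs
    omega
  -- ν (i s) makes sense: for s ≤ p, i s ≤ q or special handling
  have hfle : ∀ a c, 1 ≤ a → a ≤ c → c ≤ q → f c ≤ f a := by
    intro a c h1 h2 h3
    have := hmono a c h1 h2 h3
    simp only [hf]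
    apply max_le (le_max_left _ _)
    refine le_trans ?_ (le_max_right _ _)
    have : (ν c : ℝ) ≤ ν a := by exact_mod_cast this
    linarith
  -- Step 1: restrict to Ico 1 (i (p+1))
  have step1 : ∑ j ∈ Finset.Icc 1 q, f j = ∑ j ∈ Ico (i 0) (i (p + 1)), f j := by
    rw [hi0]
    have h1 : Finset.Icc 1 q = Finset.Ico 1 (q + 1) := by
      rw [Finset.Ico_add_one_right_eq_Icc]
    rw [h1, ← Finset.sum_Ico_consecutive f (hi1 (p+1) le_rfl) hile]
    have : ∑ j ∈ Ico (i (p + 1)) (q + 1), f j = 0 := by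
      apply Finset.sum_eq_zero
      intro j hj
      rw [Finset.mem_Ico] at hj
      have hz : ν j = 0 := hzero j hj.1 (by omega)
      simp [hf, hz]
    rw [this, add_zero]
  -- Step 2: split into blocks and bound each block
  have step2 : ∑ j ∈ Ico (i 0) (i (p + 1)), f j ≤
      ∑ s ∈ range (p + 1), ((i (s + 1) : ℝ) - i s) * b s := by
    rw [← sum_Ico_split_aux f i (p + 1) himono]
    apply Finset.sum_le_sum
    intro s hs
    rw [Finset.mem_range] at hs
    have hs' : s + 1 ≤ p + 1 := hs
    have h1s : 1 ≤ i s := hi1 s (le_of_lt hs')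
    have hblock : ∀ j ∈ Ico (i s) (i (s + 1)), f j ≤ b s := by
      intro j hj
      rw [Finset.mem_Ico] at hj
      have hjq : j ≤ q := by
        have := himono (s + 1) (p + 1) hs' le_rfl
        omega
      exact hfle (i s) j h1s hj.1 hjq
    calc ∑ j ∈ Ico (i s) (i (s + 1)), f j ≤ ∑ _j ∈ Ico (i s) (i (s + 1)), b s :=
          Finset.sum_le_sum hblock
      _ = ((i (s + 1) : ℝ) - i s) * b s := by
          rw [Finset.sum_const, Nat.card_Ico, nsmul_eq_mul]
          have : i s ≤ i (s + 1) := himono s (s + 1) (Nat.le_succ s) hs'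
          rw [Nat.cast_sub this]
  -- Step 3: gap lemma
  have hbmono : ∀ s, s < p → b (s + 1) ≤ b s := by
    intro s hs
    have h1 : 1 ≤ i s := hi1 s (by omega)
    have h2 : i s ≤ i (s + 1) := himono s (s + 1) (Nat.le_succ s) (by omega)
    have h3 : i (s + 1) ≤ q := by
      have h4 : i (s + 1) < i (p + 1) :=
        histrict (Set.mem_Icc.2 ⟨Nat.zero_le _, Nat.succ_le_succ (le_of_lt hs)⟩)
          (Set.mem_Icc.2 ⟨Nat.zero_le _, le_rfl⟩) (Nat.succ_lt_succ hs)
      omega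
    exact hfle (i s) (i (s + 1)) h1 h2 h3
  have step3 := gap_aux Δ hΔ i hi0 b p hb0 hbmono hibound
  have hlast : ((i (p + 1) : ℝ) - Δ * (p + 1)) * b p ≤ 0 := by
    have := hibound (p + 1) (Nat.le_add_left 1 p) le_rfl
    push_cast at this ⊢
    nlinarith [hb0 p]
  rw [step1]
  calc ∑ j ∈ Ico (i 0) (i (p + 1)), f j ≤
      ∑ s ∈ range (p + 1), ((i (s + 1) : ℝ) - i s) * b s := step2
    _ ≤ Δ * ∑ s ∈ range (p + 1), b s + ((i (p + 1) : ℝ) - Δ * (p + 1)) * b p := step3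
    _ ≤ Δ * ∑ s ∈ range (p + 1), b s := by linarith
end
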